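/- Correct first selection of GARD in the presence of both inlier and outlier noise: let Q ∈ ℝ^{n×m} have orthonormal columns (QᵀQ = Iₘ), let u₀ ∈ ℝⁿ be s-sparse with nonempty support S, let η ∈ ℝⁿ satisfy ‖η‖₂ ≤ ε₀, and let δ ∈ [0,1] satisfy the principal-angle bound for sparsity level s with δ < √2/2 and δ² < (min{|u₀ᵢ| : i ∈ S} − (2+√6) ε₀) / (2 ‖u₀‖₂). Then the initial residual r⁰ = (Iₙ − QQᵀ)(Qw₀ + u₀ + η) = u₀ + η − QQᵀu₀ − QQᵀη satisfies |r⁰ᵢ| > |r⁰ⱼ| for every i ∈ S and every j ∉ S. -/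

import Mathlib

/-!
Since `QᵀQ = I`, the projection `P = QQᵀ` kills `Qw₀`, so `r⁰ = u₀ + η - Pu₀ - Pη`.
The principal-angle bound applied to the 1-sparse vector `e_k` bounds every entry of a
vector `Qc` by `δ‖Qc‖`; applied to `u₀` itself, together with `‖Pa‖² = ⟨Pa, a⟩`, it gives
`‖Pu₀‖ ≤ δ‖u₀‖`, while `‖Pη‖ ≤ ‖η‖ ≤ ε₀`. Hence every entry of `r⁰ - u₀` is at most
`δ²‖u₀‖ + (1 + δ)ε₀`, and the hypothesis on `δ²` makes this less than half of
`min_{i ∈ S} |u₀ᵢ|`, because `δ ≤ 1` gives `2(1 + δ) ≤ 2 + √6`.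
-/

open Matrix

/-- Euclidean (ℓ₂) norm of a finitely-indexed real vector. -/
noncomputable def norm2 {ι : Type*} [Fintype ι] (v : ι → ℝ) : ℝ :=
  Real.sqrt (∑ i, v i ^ 2)

/-- A vector of `ℝⁿ` is `s`-sparse if it has at most `s` nonzero entries. -/
def Sparse {n : ℕ} (s : ℕ) (v : Fin n → ℝ) : Prop :=
  ∃ T : Finset (Fin n), T.card ≤ s ∧ ∀ i ∉ T, v i = 0

/-- `δ` satisfies the principal-angle bound for `Q` at sparsity level `s`:
`|⟨Qw, v⟩| ≤ δ ‖Qw‖₂ ‖v‖₂` for every `w` and every `s`-sparse `v`. -/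
def PABound {n m : ℕ} (Q : Matrix (Fin n) (Fin m) ℝ) (s : ℕ) (δ : ℝ) : Prop :=
  ∀ (w : Fin m → ℝ) (v : Fin n → ℝ), Sparse s v →
    |Q.mulVec w ⬝ᵥ v| ≤ δ * norm2 (Q.mulVec w) * norm2 v

/-- The `n × |S|` matrix `I_S` whose columns are the standard basis vectors `e_j`, `j ∈ S`. -/
def colSel {n : ℕ} (S : Finset (Fin n)) : Matrix (Fin n) {i // i ∈ S} ℝ :=
  Matrix.of fun i j => if i = (j : Fin n) then 1 else 0

/-- `F_S(a) = I_S I_Sᵀ a`: the vector agreeing with `a` on `S` and zero elsewhere. -/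
def restrictVec {n : ℕ} (S : Finset (Fin n)) (a : Fin n → ℝ) : Fin n → ℝ :=
  fun i => if i ∈ S then a i else 0

section Norm2

variable {ι : Type*} [Fintype ι]

lemma norm2_nonneg (v : ι → ℝ) : 0 ≤ norm2 v := Real.sqrt_nonneg _

lemma norm2_sq_eq_dotProduct (v : ι → ℝ) : norm2 v ^ 2 = v ⬝ᵥ v := by
  rw [norm2, Real.sq_sqrt (by positivity)]
  simp [dotProduct, sq]

lemma abs_le_norm2 (v : ι → ℝ) (j : ι) : |v j| ≤ norm2 v := by
  rw [← Real.sqrt_sq_eq_abs]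
  exact Real.sqrt_le_sqrt
    (Finset.single_le_sum (f := fun i => v i ^ 2) (fun i _ => sq_nonneg _) (Finset.mem_univ j))

lemma norm2_pi_single_one [DecidableEq ι] (j : ι) : norm2 (Pi.single j 1 : ι → ℝ) = 1 := by
  rw [norm2, Finset.sum_eq_single j (by simp +contextual) (by simp)]
  simp

end Norm2

lemma sparse_pi_single {n s : ℕ} (hs : 1 ≤ s) (k : Fin n) : Sparse s (Pi.single k 1) :=
  ⟨{k}, by simpa using hs, fun _ hi => Pi.single_eq_of_ne (by simpa using hi) 1⟩

section Projection

variable {n m : ℕ} {Q : Matrix (Fin n) (Fin m) ℝ}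

lemma mulVec_transpose_mulVec_mulVec (hQ : Qᵀ * Q = 1) (c : Fin m → ℝ) :
    Qᵀ *ᵥ (Q *ᵥ c) = c := by
  rw [mulVec_mulVec, hQ, one_mulVec]

lemma norm2_proj_sq (hQ : Qᵀ * Q = 1) (a : Fin n → ℝ) :
    norm2 (Q *ᵥ (Qᵀ *ᵥ a)) ^ 2 = Q *ᵥ (Qᵀ *ᵥ a) ⬝ᵥ a := by
  rw [norm2_sq_eq_dotProduct, dotProduct_mulVec, ← mulVec_transpose,
    mulVec_transpose_mulVec_mulVec hQ, dotProduct_comm, dotProduct_mulVec, ← mulVec_transpose,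
    transpose_transpose]

lemma norm2_proj_le (hQ : Qᵀ * Q = 1) (a : Fin n → ℝ) :
    norm2 (Q *ᵥ (Qᵀ *ᵥ a)) ≤ norm2 a := by
  set p := Q *ᵥ (Qᵀ *ᵥ a)
  have hpa : p ⬝ᵥ a = p ⬝ᵥ p := by rw [← norm2_sq_eq_dotProduct, norm2_proj_sq hQ]
  have pythagoras : norm2 (a - p) ^ 2 = norm2 a ^ 2 - norm2 p ^ 2 := by
    simp only [norm2_sq_eq_dotProduct, sub_dotProduct, dotProduct_sub, dotProduct_comm a p, hpa]
    ring
  nlinarith [sq_nonneg (norm2 (a - p)), norm2_nonneg a, norm2_nonneg p]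

variable {s : ℕ} {δ : ℝ}

lemma abs_mulVec_apply_le_of_PABound (hPA : PABound Q s δ) (hs : 1 ≤ s)
    (c : Fin m → ℝ) (k : Fin n) : |(Q *ᵥ c) k| ≤ δ * norm2 (Q *ᵥ c) := by
  simpa [norm2_pi_single_one] using hPA c (Pi.single k 1) (sparse_pi_single hs k)

lemma norm2_proj_le_of_PABound (hQ : Qᵀ * Q = 1) (hδ : 0 ≤ δ) (hPA : PABound Q s δ)
    {u : Fin n → ℝ} (hu : Sparse s u) : norm2 (Q *ᵥ (Qᵀ *ᵥ u)) ≤ δ * norm2 u := by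
  have h : norm2 (Q *ᵥ (Qᵀ *ᵥ u)) ^ 2 ≤ δ * norm2 (Q *ᵥ (Qᵀ *ᵥ u)) * norm2 u :=
    (norm2_proj_sq hQ u).trans_le ((le_abs_self _).trans (hPA _ u hu))
  rcases (norm2_nonneg (Q *ᵥ (Qᵀ *ᵥ u))).eq_or_lt with h0 | hpos
  · rw [← h0]
    exact mul_nonneg hδ (norm2_nonneg u)
  · exact le_of_mul_le_mul_right (by linarith) hpos

lemma residual_eq (hQ : Qᵀ * Q = 1) (w : Fin m → ℝ) (u η : Fin n → ℝ) :
    (Q *ᵥ w + u + η) - Q *ᵥ (Qᵀ *ᵥ (Q *ᵥ w + u + η)) =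
      u + η - Q *ᵥ (Qᵀ *ᵥ u) - Q *ᵥ (Qᵀ *ᵥ η) := by
  simp only [mulVec_add, mulVec_transpose_mulVec_mulVec hQ]
  abel

lemma abs_residual_sub_le (hQ : Qᵀ * Q = 1) (hδ : 0 ≤ δ) (hPA : PABound Q s δ) (hs : 1 ≤ s)
    {u η : Fin n → ℝ} (hu : Sparse s u) {ε₀ : ℝ} (hη : norm2 η ≤ ε₀) (w : Fin m → ℝ)
    (k : Fin n) :
    |((Q *ᵥ w + u + η) - Q *ᵥ (Qᵀ *ᵥ (Q *ᵥ w + u + η))) k - u k| ≤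
      δ ^ 2 * norm2 u + (1 + δ) * ε₀ := by
  have hp : |(Q *ᵥ (Qᵀ *ᵥ u)) k| ≤ δ ^ 2 * norm2 u :=
    calc |(Q *ᵥ (Qᵀ *ᵥ u)) k| ≤ δ * norm2 (Q *ᵥ (Qᵀ *ᵥ u)) :=
          abs_mulVec_apply_le_of_PABound hPA hs _ k
      _ ≤ δ * (δ * norm2 u) :=
          mul_le_mul_of_nonneg_left (norm2_proj_le_of_PABound hQ hδ hPA hu) hδ
      _ = δ ^ 2 * norm2 u := by ring
  have hq : |(Q *ᵥ (Qᵀ *ᵥ η)) k| ≤ δ * ε₀ :=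
    (abs_mulVec_apply_le_of_PABound hPA hs _ k).trans
      (mul_le_mul_of_nonneg_left ((norm2_proj_le hQ η).trans hη) hδ)
  have he : |η k| ≤ ε₀ := (abs_le_norm2 η k).trans hη
  rw [residual_eq hQ]
  simp only [Pi.sub_apply, Pi.add_apply]
  rw [abs_le] at hp hq he ⊢
  constructor <;> linarith [hp.1, hp.2, hq.1, hq.2, he.1, he.2]

end Projection

theorem stmt15_general {n m s : ℕ} (Q : Matrix (Fin n) (Fin m) ℝ) (hQ : Qᵀ * Q = 1)
    (δ : ℝ) (hδ0 : 0 ≤ δ) (hδ1 : δ ≤ 1) (hPA : PABound Q s δ)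
    (u₀ : Fin n → ℝ) (S : Finset (Fin n)) (hsupp : ∀ i, i ∈ S ↔ u₀ i ≠ 0)
    (hSne : S.Nonempty) (hcard : S.card ≤ s)
    (η : Fin n → ℝ) (ε₀ : ℝ) (hη : norm2 η ≤ ε₀)
    (hbound : δ ^ 2 <
      (S.inf' hSne (fun i => |u₀ i|) - (2 + Real.sqrt 6) * ε₀) / (2 * norm2 u₀))
    (w₀ : Fin m → ℝ) (r₀ : Fin n → ℝ)
    (hr₀ : r₀ = (Q.mulVec w₀ + u₀ + η) -
      Q.mulVec (Qᵀ.mulVec (Q.mulVec w₀ + u₀ + η))) :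
    ∀ i ∈ S, ∀ j ∉ S, |r₀ j| < |r₀ i| := by
  intro i hi j hj
  have hs : 1 ≤ s := (Finset.one_le_card.2 hSne).trans hcard
  have hu : Sparse s u₀ := ⟨S, hcard, fun k hk => not_not.1 (mt (hsupp k).2 hk)⟩
  have hres := abs_residual_sub_le hQ hδ0 hPA hs hu hη w₀
  rw [← hr₀] at hres
  have hui : 0 < |u₀ i| := abs_pos.2 ((hsupp i).1 hi)
  have hgap : 2 * (δ ^ 2 * norm2 u₀ + (1 + δ) * ε₀) < |u₀ i| := by
    have hmin : S.inf' hSne (fun i => |u₀ i|) ≤ |u₀ i| := Finset.inf'_le _ hi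
    have h := (lt_div_iff₀ (by linarith [abs_le_norm2 u₀ i])).1 hbound
    have hsqrt6 : 2 ≤ Real.sqrt 6 := Real.le_sqrt_of_sq_le (by norm_num)
    have hε₀ : 0 ≤ ε₀ := (norm2_nonneg η).trans hη
    linarith [mul_nonneg (by linarith : 0 ≤ Real.sqrt 6 - 2 * δ) hε₀]
  have hrj := hres j
  rw [not_not.1 (mt (hsupp j).2 hj), sub_zero] at hrj
  linarith [hres i, abs_sub_abs_le_abs_sub (u₀ i) (r₀ i), abs_sub_comm (r₀ i) (u₀ i)]

/-- Correct first selection of GARD with both inlier and outlier noise: if `δ < √2/2` and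
`δ² < (min_{i ∈ S} |u₀ᵢ| − (2 + √6) ε₀) / (2‖u₀‖₂)`, then the initial residual
`r⁰ = (I − QQᵀ)(Qw₀ + u₀ + η)` satisfies `|r⁰ᵢ| > |r⁰ⱼ|` for every `i ∈ S`, `j ∉ S`. -/
theorem stmt15 {n m s : ℕ} (Q : Matrix (Fin n) (Fin m) ℝ) (hQ : Qᵀ * Q = 1)
    (δ : ℝ) (hδ0 : 0 ≤ δ) (hδ1 : δ ≤ 1) (hPA : PABound Q s δ)
    (u₀ : Fin n → ℝ) (S : Finset (Fin n)) (hsupp : ∀ i, i ∈ S ↔ u₀ i ≠ 0)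
    (hSne : S.Nonempty) (hcard : S.card ≤ s)
    (η : Fin n → ℝ) (ε₀ : ℝ) (hη : norm2 η ≤ ε₀)
    (hδhalf : δ < Real.sqrt 2 / 2)
    (hbound : δ ^ 2 <
      (S.inf' hSne (fun i => |u₀ i|) - (2 + Real.sqrt 6) * ε₀) / (2 * norm2 u₀))
    (w₀ : Fin m → ℝ) (r₀ : Fin n → ℝ)
    (hr₀ : r₀ = (Q.mulVec w₀ + u₀ + η) -
      Q.mulVec (Qᵀ.mulVec (Q.mulVec w₀ + u₀ + η))) :
    ∀ i ∈ S, ∀ j ∉ S, |r₀ j| < |r₀ i| :=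
  stmt15_general Q hQ δ hδ0 hδ1 hPA u₀ S hsupp hSne hcard η ε₀ hη hbound w₀ r₀ hr₀
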